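/- The subgroup of SL(2,ℤ) generated by the matrices (0 −1; 1 0) and (1 2; 0 1) is exactly Θ, and Θ has index 3 in SL(2,ℤ). -/

import Mathlib

/-- The mod-2 condition defining the Theta group `Θ`: the entries of the matrix
are congruent mod 2 to `(1 0; 0 1)` or `(0 1; 1 0)`. -/
def ThetaMod2 (a b c d : ℤ) : Prop :=
  ((a : ZMod 2), (b : ZMod 2), (c : ZMod 2), (d : ZMod 2)) ∈
    ({(1, 0, 0, 1), (0, 1, 1, 0)} :
      Set (ZMod 2 × ZMod 2 × ZMod 2 × ZMod 2))

/-- Membership in `Θ` for an element of `SL(2,ℤ)`. -/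
def IsTheta (M : Matrix.SpecialLinearGroup (Fin 2) ℤ) : Prop :=
  ThetaMod2 (M.1 0 0) (M.1 0 1) (M.1 1 0) (M.1 1 1)

/-- The matrix `S = (0 -1; 1 0)` in `SL(2,ℤ)`. -/
def SmatE : Matrix.SpecialLinearGroup (Fin 2) ℤ :=
  ⟨!![0, -1; 1, 0], by norm_num [Matrix.det_fin_two_of]⟩

/-- The matrix `T = (1 2; 0 1)` in `SL(2,ℤ)`. -/
def TmatE : Matrix.SpecialLinearGroup (Fin 2) ℤ :=
  ⟨!![1, 2; 0, 1], by norm_num [Matrix.det_fin_two_of]⟩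

/-!
Reduction mod 2 maps `SL(2,ℤ)` onto the six-element group `SL(2,𝔽₂)`, and `Θ` is the
preimage of the order-two subgroup generated by `(0 1; 1 0)`, the image of `S`; hence
`[SL(2,ℤ) : Θ] = 6 / 2 = 3`. Both generators lie in `Θ`. Conversely, for `(a b; c d) ∈ Θ` the
sum `a + c` is odd, so some `S (1 2; 0 1)^k` replaces `c` by `a + 2kc` with `|a + 2kc| < |c|`;
descending on `|c|` reaches `c = 0`, where the matrix is `±(1 2; 0 1)^n` and `-1 = S²`.
-/

open Matrix MatrixGroups ModularGroup Subgroup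

abbrev reduceModTwo : SL(2, ℤ) →* SL(2, ZMod 2) :=
  Matrix.SpecialLinearGroup.map (Int.castRingHom (ZMod 2))

def swapModTwo : SL(2, ZMod 2) := ⟨!![0, 1; 1, 0], by decide⟩

def thetaSubgroup : Subgroup SL(2, ℤ) := (zpowers swapModTwo).comap reduceModTwo

lemma orderOf_swapModTwo : orderOf swapModTwo = 2 :=
  orderOf_eq_prime (by decide) (by decide)

lemma mem_zpowers_swapModTwo_iff {y : SL(2, ZMod 2)} :
    y ∈ zpowers swapModTwo ↔ y = 1 ∨ y = swapModTwo := by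
  rw [mem_zpowers_iff_mem_range_orderOf, orderOf_swapModTwo]
  simp [Finset.range_add_one, or_comm]

lemma isTheta_iff_mem_thetaSubgroup {M : SL(2, ℤ)} : IsTheta M ↔ M ∈ thetaSubgroup := by
  rw [thetaSubgroup, mem_comap, mem_zpowers_swapModTwo_iff]
  simp only [Matrix.SpecialLinearGroup.ext_iff, Fin.forall_fin_two]
  simp [IsTheta, ThetaMod2, swapModTwo, and_assoc]

lemma reduceModTwo_surjective : Function.Surjective reduceModTwo := fun y ↦ by
  -- `SL(2,𝔽₂)` has six elements, the reductions of these words in `S` and `T = (1 1; 0 1)`.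
  obtain ⟨x, -, hx⟩ := Finset.mem_image.mp <| show y ∈
    ({1, S, T, S * T, T * S, S * T * S} : Finset SL(2, ℤ)).image reduceModTwo by revert y; decide
  exact ⟨x, hx⟩

lemma index_thetaSubgroup : thetaSubgroup.index = 3 := by
  have hcard : Nat.card SL(2, ZMod 2) = 6 := by rw [Nat.card_eq_fintype_card]; decide
  have h := (zpowers swapModTwo).index_mul_card
  rw [Nat.card_zpowers, orderOf_swapModTwo, hcard] at h
  rw [thetaSubgroup, index_comap_of_surjective _ reduceModTwo_surjective]
  omega

lemma closure_le_thetaSubgroup : Subgroup.closure {SmatE, TmatE} ≤ thetaSubgroup := by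
  rw [Subgroup.closure_le]
  rintro x (rfl | rfl)
  · exact mem_comap.mpr <| (show reduceModTwo SmatE = swapModTwo by decide) ▸ mem_zpowers _
  · exact mem_comap.mpr <| (show reduceModTwo TmatE = 1 by decide) ▸ one_mem _

lemma IsTheta.odd_add {M : SL(2, ℤ)} (hM : IsTheta M) : Odd (M 0 0 + M 1 0) := by
  rw [← ZMod.intCast_eq_one_iff_odd, Int.cast_add]
  rcases hM with h | h <;> simp only [Set.mem_singleton_iff, Prod.mk.injEq] at h <;>
    rw [h.1, h.2.2.1] <;> decide

lemma IsTheta.even_of_lowerLeft_eq_zero {M : SL(2, ℤ)} (hM : IsTheta M) (hc : M 1 0 = 0) :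
    Even (M 0 1) := by
  rw [← ZMod.intCast_eq_zero_iff_even]
  rcases hM with h | h <;> simp only [Set.mem_singleton_iff, Prod.mk.injEq, hc] at h
  · exact h.2.1
  · exact absurd h.2.2.1 (by decide)

lemma coe_SmatE : (SmatE : Matrix (Fin 2) (Fin 2) ℤ) = !![0, -1; 1, 0] := rfl

lemma SmatE_sq : SmatE ^ 2 = -1 := by decide

lemma coe_TmatE_zpow (n : ℤ) : (TmatE ^ n).1 = !![1, 2 * n; 0, 1] := by
  rw [show TmatE = T ^ (2 : ℤ) by decide, ← _root_.zpow_mul, coe_T_zpow]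

lemma exists_natAbs_add_two_mul_lt {a c : ℤ} (hc : c ≠ 0) (h : Odd (a + c)) :
    ∃ k : ℤ, (a + 2 * k * c).natAbs < c.natAbs := by
  -- Reduce `a` modulo `2c` into `[0, 2|c|)`; parity excludes the remainder `|c|`.
  have h2c : 2 * c ≠ 0 := mul_ne_zero two_ne_zero hc
  obtain ⟨t, ht⟩ := (Int.mod_modEq a (2 * c)).dvd
  have hr0 := Int.emod_nonneg a h2c
  have hr1 := Int.emod_lt_abs a h2c
  have hr2 := Int.emod_emod_of_dvd a (dvd_mul_right 2 c)
  have hsign := Int.mul_sign_self c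
  rw [abs_mul, abs_two, Int.abs_eq_natAbs] at hr1
  generalize a % (2 * c) = r at *
  obtain ⟨m, hm⟩ := h
  rcases lt_or_gt_of_ne (show r ≠ c.natAbs by omega) with hlt | hgt
  · exact ⟨-t, by rw [show a + 2 * -t * c = r by linarith]; omega⟩
  · refine ⟨-t - c.sign, ?_⟩
    rw [show a + 2 * (-t - c.sign) * c = r - 2 * c.natAbs by linarith]
    omega

lemma mem_closure_of_lowerLeft_eq_zero {M : SL(2, ℤ)} (hM : IsTheta M) (hc : M 1 0 = 0) :
    M ∈ Subgroup.closure {SmatE, TmatE} := by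
  obtain ⟨n, hn⟩ := hM.even_of_lowerLeft_eq_zero hc
  have had : M 0 0 * M 1 1 = 1 := by
    have := M.det_coe
    rwa [det_fin_two, hc, mul_zero, sub_zero] at this
  have hS : SmatE ∈ Subgroup.closure {SmatE, TmatE} := subset_closure (by simp)
  have hT : TmatE ∈ Subgroup.closure {SmatE, TmatE} := subset_closure (by simp)
  rcases Int.eq_one_or_neg_one_of_mul_eq_one' had with ⟨ha, hd⟩ | ⟨ha, hd⟩
  · have : M = TmatE ^ n := by
      ext i j; fin_cases i <;> fin_cases j <;> simp [coe_TmatE_zpow, ha, hd, hc, hn, two_mul]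
    exact this ▸ zpow_mem hT n
  · have : M = SmatE ^ 2 * TmatE ^ (-n) := by
      rw [SmatE_sq, neg_one_mul]
      ext i j; fin_cases i <;> fin_cases j <;> simp [coe_TmatE_zpow, ha, hd, hc, hn, two_mul]
    exact this ▸ mul_mem (pow_mem hS 2) (zpow_mem hT _)

theorem mem_closure_of_isTheta (M : SL(2, ℤ)) (hM : IsTheta M) :
    M ∈ Subgroup.closure {SmatE, TmatE} := by
  by_cases hc : M 1 0 = 0
  · exact mem_closure_of_lowerLeft_eq_zero hM hc
  obtain ⟨k, hk⟩ := exists_natAbs_add_two_mul_lt hc hM.odd_add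
  set g := SmatE * TmatE ^ k
  have hg : g ∈ Subgroup.closure {SmatE, TmatE} :=
    mul_mem (subset_closure (by simp)) (zpow_mem (subset_closure (by simp)) k)
  have hlower : (g * M) 1 0 = M 0 0 + 2 * k * M 1 0 := by
    simp [g, coe_SmatE, coe_TmatE_zpow, mul_apply, Fin.sum_univ_two]
  have hgM : IsTheta (g * M) := isTheta_iff_mem_thetaSubgroup.mpr <|
    mul_mem (closure_le_thetaSubgroup hg) (isTheta_iff_mem_thetaSubgroup.mp hM)
  exact inv_mul_cancel_left g M ▸ mul_mem (inv_mem hg) (mem_closure_of_isTheta (g * M) hgM)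
termination_by (M 1 0).natAbs
decreasing_by rw [hlower]; exact hk

theorem closure_eq_thetaSubgroup : Subgroup.closure {SmatE, TmatE} = thetaSubgroup :=
  le_antisymm closure_le_thetaSubgroup fun M hM ↦
    mem_closure_of_isTheta M (isTheta_iff_mem_thetaSubgroup.mpr hM)

/-- The subgroup of `SL(2,ℤ)` generated by `(0 −1; 1 0)` and `(1 2; 0 1)` is
exactly the Theta group `Θ`, and `Θ` has index `3` in `SL(2,ℤ)`. -/
theorem generated_eq_Theta_and_index_three :
    (∀ M : Matrix.SpecialLinearGroup (Fin 2) ℤ,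
      M ∈ Subgroup.closure ({SmatE, TmatE} :
        Set (Matrix.SpecialLinearGroup (Fin 2) ℤ)) ↔ IsTheta M) ∧
    (Subgroup.closure ({SmatE, TmatE} :
        Set (Matrix.SpecialLinearGroup (Fin 2) ℤ))).index = 3 := by
  rw [closure_eq_thetaSubgroup]
  exact ⟨fun M ↦ isTheta_iff_mem_thetaSubgroup.symm, index_thetaSubgroup⟩
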